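/- arXiv:2204.02201 — 2 statements merged into one kernel-verified Lean document; each statement's English description precedes it below -/
import Mathlib

section
/- For any positive integers n, n', any binary word y ∈ Z_2^{n'}, and any 1 ≤ i ≤ n'-1: if y_i = y_{i+1} then f_n(y) = f_n(y_{[1,i]}) + f_n(y_{[i+1,n']}) - n; and if y_i ≠ y_{i+1} then f_n(y) = f_n(y_{[1,i]}) + f_n(y_{[i+1,n']}) - t(y_{[1,i]})·h(y_{[i+1,n']}). -/
open Finset

/-- The (0-indexed, inclusive) segment `x_i,…,x_j` is alternating, i.e. of the
form `abab…` : adjacent symbols differ and the segment has period 2. -/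
def IsAltOn {m : ℕ} (x : ℕ → Fin m) (i j : ℕ) : Prop :=
  (∀ k ∈ Finset.Ico i j, x k ≠ x (k + 1)) ∧ ∀ k ∈ Finset.Ico i (j - 1), x k = x (k + 2)

instance {m : ℕ} (x : ℕ → Fin m) (i j : ℕ) : Decidable (IsAltOn x i j) :=
  inferInstanceAs (Decidable (_ ∧ _))

/-- The set of (0-indexed, inclusive) index pairs of maximal alternating segments
of the word `x_0,…,x_{n-1}`. -/
def altSegs {m : ℕ} (n : ℕ) (x : ℕ → Fin m) : Finset (ℕ × ℕ) :=
  (Finset.range n ×ˢ Finset.range n).filter (fun p => p.1 ≤ p.2 ∧ IsAltOn x p.1 p.2 ∧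
    (p.1 = 0 ∨ ¬ IsAltOn x (p.1 - 1) p.2) ∧ (p.2 = n - 1 ∨ ¬ IsAltOn x p.1 (p.2 + 1)))

/-- `a(x)` : the number of maximal alternating segments of `x_0,…,x_{n-1}`. -/
def aCount {m : ℕ} (n : ℕ) (x : ℕ → Fin m) : ℕ := (altSegs n x).card

/-- `∑ s_i` : the sum of the lengths of the maximal alternating segments. -/
def sumLen {m : ℕ} (n : ℕ) (x : ℕ → Fin m) : ℕ := ∑ p ∈ altSegs n x, (p.2 - p.1 + 1)

/-- `∑ s_i²` : the sum of the squares of the lengths of the maximal alternating segments. -/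
def sumLenSq {m : ℕ} (n : ℕ) (x : ℕ → Fin m) : ℕ := ∑ p ∈ altSegs n x, (p.2 - p.1 + 1) ^ 2

/-- `ρ(x)` : the number of runs of the word `x_0,…,x_{n-1}`. -/
def rho {m : ℕ} (n : ℕ) (x : ℕ → Fin m) : ℕ :=
  1 + ((Finset.range (n - 1)).filter (fun i => x i ≠ x (i + 1))).card

/-- `h(x)` : the length of the first maximal alternating segment of `x_0,…,x_{n-1}`. -/
def headAlt {m : ℕ} (n : ℕ) (x : ℕ → Fin m) : ℕ :=
  ((Finset.range n).filter (fun j => IsAltOn x 0 j)).card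

/-- `t(x)` : the length of the last maximal alternating segment of `x_0,…,x_{n-1}`. -/
def tailAlt {m : ℕ} (n : ℕ) (x : ℕ → Fin m) : ℕ :=
  ((Finset.range n).filter (fun j => IsAltOn x (n - 1 - j) (n - 1))).card

/-- Extend a word of length `n` to a function `ℕ → Fin m` (junk value `0` beyond `n`). -/
def extWord {m : ℕ} (n : ℕ) (hm : 0 < m) (y : Fin n → Fin m) : ℕ → Fin m :=
  fun i => if h : i < n then y ⟨i, h⟩ else ⟨0, hm⟩

/-- The FLL ball of radius 1 around `x` : all words `y` of length `n` sharing with `x`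
a common subsequence of length `n - 1` (equivalently, `d_l(x,y) ≤ 1`). -/
def L1ball {m : ℕ} (n : ℕ) (x : Fin n → Fin m) : Set (Fin n → Fin m) :=
  {y | ∃ z : List (Fin m), z.length = n - 1 ∧ z.Sublist (List.ofFn x) ∧ z.Sublist (List.ofFn y)}

/-- `|L_1(x)|` : the size of the FLL ball of radius 1 around `x`. -/
noncomputable def L1size {m : ℕ} (n : ℕ) (x : Fin n → Fin m) : ℕ := (L1ball n x).ncard

/-- `f_n(y)` for binary words `y` of length `len` : `ρ(y)·n - (1/2)∑ s_j²`. -/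
noncomputable def fB (n len : ℕ) (y : ℕ → Fin 2) : ℝ :=
  (rho len y : ℝ) * n - (sumLenSq len y : ℝ) / 2

/-- `f_{m,n}(y)` for words `y` of length `len` over `Z_m` :
`ρ(y)(mn-n-1) - (1/2)∑ s_j² + (3/2)∑ s_j - a(y)`. -/
noncomputable def fM (m n len : ℕ) (y : ℕ → Fin m) : ℝ :=
  (rho len y : ℝ) * ((m : ℝ) * n - n - 1) - (sumLenSq len y : ℝ) / 2
    + 3 / 2 * (sumLen len y : ℝ) - (aCount len y : ℝ)

/-!
Call an interval `[k, l]` of positions alternating if no two adjacent letters in it are equal.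
Each alternating interval lies in exactly one maximal alternating segment, and a segment of
length `s` contains `s (s + 1) / 2` of them; hence `2 |A(y)| = ∑ s_j² + n'` for the set `A(y)` of
alternating intervals, and `f_n(y) = ρ(y) n - |A(y)| + n' / 2`. Both `ρ` and `|A|` are almost
additive under cutting `y` between `y_i` and `y_{i+1}`: if `y_i = y_{i+1}` the two runs at the cut
merge and no alternating interval crosses the cut; otherwise no runs merge and the crossing
alternating intervals are exactly the pairs (alternating suffix of `y_{[1,i]}`, alternating prefix
of `y_{[i+1,n']}`), of which there are `t · h`.
-/

theorem Finset.two_mul_card_filter_fst_le_snd {α : Type*} [LinearOrder α] (s : Finset α) :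
    2 * #((s ×ˢ s).filter fun q => q.1 ≤ q.2) = #s ^ 2 + #s := by
  have hswap : #((s ×ˢ s).filter fun q => q.2 ≤ q.1) = #((s ×ˢ s).filter fun q => q.1 ≤ q.2) :=
    card_nbij' Prod.swap Prod.swap (fun _ => by simp +contextual) (fun _ => by simp +contextual)
      (fun _ _ => rfl) (fun _ _ => rfl)
  have hunion : ((s ×ˢ s).filter fun q => q.1 ≤ q.2) ∪ ((s ×ˢ s).filter fun q => q.2 ≤ q.1)
      = s ×ˢ s := by
    rw [← filter_or]
    exact filter_true_of_mem fun q _ => le_total _ _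
  have hinter : ((s ×ˢ s).filter fun q => q.1 ≤ q.2) ∩ ((s ×ˢ s).filter fun q => q.2 ≤ q.1)
      = s.diag := by
    ext ⟨a, b⟩
    simp only [mem_inter, mem_filter, mem_product, mem_diag]
    constructor
    · rintro ⟨⟨⟨ha, -⟩, hab⟩, -, hba⟩
      exact ⟨ha, le_antisymm hab hba⟩
    · rintro ⟨ha, rfl⟩
      exact ⟨⟨⟨ha, ha⟩, le_rfl⟩, ⟨ha, ha⟩, le_rfl⟩
  have h := card_union_add_card_inter ((s ×ˢ s).filter fun q => q.1 ≤ q.2)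
    ((s ×ˢ s).filter fun q => q.2 ≤ q.1)
  rw [hunion, hinter, card_product, diag_card, hswap] at h
  rw [sq]
  omega

section Alternation

variable {x : ℕ → Fin 2} {a b i k l : ℕ}

theorem isAltOn_iff_forall_ne : IsAltOn x a b ↔ ∀ k, a ≤ k → k < b → x k ≠ x (k + 1) := by
  simp only [IsAltOn, mem_Ico]
  refine ⟨fun h k hak hkb => h.1 k ⟨hak, hkb⟩,
    fun h => ⟨fun k hk => h k hk.1 hk.2, fun k hk => ?_⟩⟩
  have h₁ := h k hk.1 (by omega)
  have h₂ : x (k + 1) ≠ x (k + 2) := h (k + 1) (by omega) (by omega)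
  omega

theorem IsAltOn.mono {a' b' : ℕ} (h : IsAltOn x a b) (ha : a ≤ a') (hb : b' ≤ b) :
    IsAltOn x a' b' := by
  rw [isAltOn_iff_forall_ne] at h ⊢
  exact fun k hak hkb => h k (ha.trans hak) (hkb.trans_le hb)

theorem isAltOn_shift : IsAltOn (fun k => x (k + i)) a b ↔ IsAltOn x (a + i) (b + i) := by
  simp only [isAltOn_iff_forall_ne]
  refine ⟨fun h k hak hkb => ?_, fun h k hak hkb => ?_⟩
  · obtain ⟨k, rfl⟩ : ∃ j, k = j + i := ⟨k - i, by omega⟩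
    simpa [add_right_comm] using h k (by omega) (by omega)
  · simpa [add_right_comm] using h (k + i) (by omega) (by omega)

theorem isAltOn_iff_of_lt_of_le (hk : k < i) (hl : i ≤ l) :
    IsAltOn x k l ↔ IsAltOn x k (i - 1) ∧ x (i - 1) ≠ x i ∧ IsAltOn x i l := by
  simp only [isAltOn_iff_forall_ne]
  refine ⟨fun h => ⟨fun j hkj hji => h j hkj (by omega), ?_, fun j hij hjl => h j (by omega) hjl⟩,
    fun ⟨hleft, hcut, hright⟩ j hkj hjl => ?_⟩
  · simpa [Nat.sub_add_cancel (by omega : 1 ≤ i)] using h (i - 1) (by omega) (by omega)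
  · rcases lt_trichotomy j (i - 1) with hj | rfl | hj
    · exact hleft j hkj hj
    · rwa [Nat.sub_add_cancel (by omega)]
    · exact hright j (by omega) hjl

theorem isAltOn_self (a : ℕ) : IsAltOn x a a :=
  isAltOn_iff_forall_ne.2 fun _ h h' => by omega

theorem IsAltOn.trans {c : ℕ} (h₁ : IsAltOn x a b) (h₂ : IsAltOn x b c) : IsAltOn x a c := by
  rw [isAltOn_iff_forall_ne] at *
  exact fun j haj hjc => (lt_or_ge j b).elim (h₁ j haj) fun hbj => h₂ j hbj hjc

theorem isAltOn_pred_iff (ha : a ≠ 0) (hab : a ≤ b) (h : IsAltOn x a b) :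
    IsAltOn x (a - 1) b ↔ x (a - 1) ≠ x a := by
  simp [isAltOn_iff_of_lt_of_le (by omega : a - 1 < a) hab, isAltOn_self, h]

theorem isAltOn_succ_iff (hab : a ≤ b) (h : IsAltOn x a b) :
    IsAltOn x a (b + 1) ↔ x b ≠ x (b + 1) := by
  simp [isAltOn_iff_of_lt_of_le (Nat.lt_succ_of_le hab) le_rfl, isAltOn_self, h]

end Alternation

section Segments

variable {n : ℕ} {x : ℕ → Fin 2} {a b k : ℕ}

theorem mem_altSegs_iff : (a, b) ∈ altSegs n x ↔ a ≤ b ∧ b < n ∧ IsAltOn x a b ∧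
    (a = 0 ∨ x (a - 1) = x a) ∧ (b + 1 = n ∨ x b = x (b + 1)) := by
  simp only [altSegs, mem_filter, mem_product, mem_range]
  by_cases hab : a ≤ b
  swap; · simp [hab]
  by_cases halt : IsAltOn x a b
  swap; · simp [halt]
  have hstart : (a = 0 ∨ ¬IsAltOn x (a - 1) b) ↔ (a = 0 ∨ x (a - 1) = x a) :=
    or_congr_right' fun ha => by rw [isAltOn_pred_iff ha hab halt, not_not]
  have hend : (b = n - 1 ∨ ¬IsAltOn x a (b + 1)) ↔ (b = n - 1 ∨ x b = x (b + 1)) :=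
    or_congr_right (by rw [isAltOn_succ_iff hab halt, not_not])
  rw [hstart, hend]
  constructor
  · rintro ⟨⟨-, hbn⟩, -, -, hs, he⟩
    exact ⟨hab, hbn, halt, hs, he.imp_left (by omega)⟩
  · rintro ⟨-, hbn, -, hs, he⟩
    exact ⟨⟨by omega, hbn⟩, hab, halt, hs, he.imp_left (by omega)⟩

/- In a binary word the maximal alternating segments are cut exactly between adjacent equal
letters; `altSegOf n x k` is the maximal alternating segment of `x_0, …, x_{n-1}` through `k`. -/
def altSegStart (x : ℕ → Fin 2) (k : ℕ) : ℕ :=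
  Nat.findGreatest (fun a => a = 0 ∨ x (a - 1) = x a) k

def altSegEnd (n : ℕ) (x : ℕ → Fin 2) (k : ℕ) : ℕ :=
  Nat.find (⟨k + n, by omega, .inl (by omega)⟩ : ∃ b, k ≤ b ∧ (n ≤ b + 1 ∨ x b = x (b + 1)))

def altSegOf (n : ℕ) (x : ℕ → Fin 2) (k : ℕ) : ℕ × ℕ := (altSegStart x k, altSegEnd n x k)

theorem altSegStart_eq_iff :
    altSegStart x k = a ↔ a ≤ k ∧ (a = 0 ∨ x (a - 1) = x a) ∧ IsAltOn x a k := by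
  rw [altSegStart, Nat.findGreatest_eq_iff, isAltOn_iff_forall_ne]
  refine and_congr_right fun hak => and_congr ⟨fun h => (eq_or_ne a 0).elim .inl h, fun h _ => h⟩
    ⟨fun h j haj hjk heq => h (by omega : a < j + 1) hjk (.inr heq),
      fun h m ham hmk hm => ?_⟩
  rcases hm with rfl | hm
  · omega
  · exact h (m - 1) (by omega) (by omega) (by rwa [Nat.sub_add_cancel (by omega)])

theorem altSegEnd_eq_iff (hk : k < n) :
    altSegEnd n x k = b ↔ k ≤ b ∧ b < n ∧ (b + 1 = n ∨ x b = x (b + 1)) ∧ IsAltOn x k b := by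
  rw [altSegEnd, Nat.find_eq_iff, isAltOn_iff_forall_ne]
  constructor
  · rintro ⟨⟨hkb, hend⟩, hmin⟩
    have hbn : b < n := by
      by_contra!
      exact hmin (n - 1) (by omega) ⟨by omega, .inl (by omega)⟩
    refine ⟨hkb, hbn, hend.imp_left (by omega), fun j hkj hjb heq => hmin j hjb ⟨hkj, .inr heq⟩⟩
  · rintro ⟨hkb, hbn, hend, halt⟩
    refine ⟨⟨hkb, hend.imp_left (by omega)⟩, fun m hmb ⟨hkm, hm⟩ => ?_⟩
    rcases hm with hm | hm
    · omega
    · exact halt m hkm hmb hm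

theorem altSegOf_eq_iff (hk : k < n) :
    altSegOf n x k = (a, b) ↔ (a, b) ∈ altSegs n x ∧ a ≤ k ∧ k ≤ b := by
  rw [altSegOf, Prod.mk.injEq, altSegStart_eq_iff, altSegEnd_eq_iff hk, mem_altSegs_iff]
  constructor
  · rintro ⟨⟨hak, hstart, halt₁⟩, hkb, hbn, hend, halt₂⟩
    exact ⟨⟨hak.trans hkb, hbn, halt₁.trans halt₂, hstart, hend⟩, hak, hkb⟩
  · rintro ⟨⟨-, hbn, halt, hstart, hend⟩, hak, hkb⟩
    exact ⟨⟨hak, hstart, halt.mono le_rfl hkb⟩, hkb, hbn, hend, halt.mono hak le_rfl⟩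

theorem altSegOf_mem_altSegs (hk : k < n) : altSegOf n x k ∈ altSegs n x :=
  ((altSegOf_eq_iff hk).1 rfl).1

end Segments

section Counting

variable {n : ℕ} {x : ℕ → Fin 2}

theorem sumLen_eq (n : ℕ) (x : ℕ → Fin 2) : sumLen n x = n := by
  have hfiber : ∀ p ∈ altSegs n x,
      #((range n).filter fun k => altSegOf n x k = p) = p.2 - p.1 + 1 := by
    rintro ⟨a, b⟩ hp
    obtain ⟨hab, hbn, -⟩ := mem_altSegs_iff.1 hp
    have : (range n).filter (fun k => altSegOf n x k = (a, b)) = Icc a b := by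
      ext k
      simp only [mem_filter, mem_range, mem_Icc]
      exact ⟨fun ⟨hk, h⟩ => ((altSegOf_eq_iff hk).1 h).2,
        fun ⟨hak, hkb⟩ => ⟨by omega, (altSegOf_eq_iff (by omega)).2 ⟨hp, hak, hkb⟩⟩⟩
    rw [this, Nat.card_Icc]
    omega
  rw [sumLen, ← sum_congr rfl hfiber, ← card_eq_sum_card_fiberwise fun k hk =>
    altSegOf_mem_altSegs (mem_range.1 hk), card_range]

def altIntervals (n : ℕ) (x : ℕ → Fin 2) : Finset (ℕ × ℕ) :=
  (range n ×ˢ range n).filter fun q => q.1 ≤ q.2 ∧ IsAltOn x q.1 q.2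

theorem mem_altIntervals {k l : ℕ} :
    (k, l) ∈ altIntervals n x ↔ k ≤ l ∧ l < n ∧ IsAltOn x k l := by
  simp only [altIntervals, mem_filter, mem_product, mem_range]
  constructor
  · rintro ⟨⟨-, hl⟩, hkl, h⟩
    exact ⟨hkl, hl, h⟩
  · rintro ⟨hkl, hl, h⟩
    exact ⟨⟨by omega, hl⟩, hkl, h⟩

theorem two_mul_card_altIntervals (n : ℕ) (x : ℕ → Fin 2) :
    2 * #(altIntervals n x) = sumLenSq n x + n := by
  have hfiber : ∀ p ∈ altSegs n x,
      2 * #((altIntervals n x).filter fun q => altSegOf n x q.1 = p)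
        = (p.2 - p.1 + 1) ^ 2 + (p.2 - p.1 + 1) := by
    rintro ⟨a, b⟩ hp
    obtain ⟨hab, hbn, halt, -, hend⟩ := mem_altSegs_iff.1 hp
    have : (altIntervals n x).filter (fun q => altSegOf n x q.1 = (a, b))
        = (Icc a b ×ˢ Icc a b).filter fun q => q.1 ≤ q.2 := by
      ext ⟨k, l⟩
      simp only [mem_filter, mem_product, mem_Icc, mem_altIntervals]
      constructor
      · rintro ⟨⟨hkl, hln, hkl_alt⟩, h⟩
        obtain ⟨-, hak, hkb⟩ := (altSegOf_eq_iff (by omega)).1 h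
        -- an alternating interval starting inside `[a, b]` cannot cross the break after `b`
        have hlb : l ≤ b := by
          by_contra! hbl
          rcases hend with hend | hend
          · omega
          · exact isAltOn_iff_forall_ne.1 hkl_alt b hkb hbl hend
        exact ⟨⟨⟨hak, hkb⟩, by omega, hlb⟩, hkl⟩
      · rintro ⟨⟨⟨hak, hkb⟩, -, hlb⟩, hkl⟩
        exact ⟨⟨hkl, by omega, halt.mono hak hlb⟩, (altSegOf_eq_iff (by omega)).2 ⟨hp, hak, hkb⟩⟩
    rw [this, two_mul_card_filter_fst_le_snd, Nat.card_Icc, Nat.sub_add_comm hab]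
  rw [card_eq_sum_card_fiberwise fun q hq => altSegOf_mem_altSegs
      (lt_of_le_of_lt (mem_altIntervals.1 hq).1 (mem_altIntervals.1 hq).2.1),
    mul_sum, sum_congr rfl hfiber, sum_add_distrib, ← sumLenSq, ← sumLen, sumLen_eq]

end Counting

section Splitting

variable {n i : ℕ} {x : ℕ → Fin 2}

theorem rho_add_rho (hi : 1 ≤ i) (hin : i < n) :
    rho i x + rho (n - i) (fun k => x (k + i)) = rho n x + if x (i - 1) = x i then 1 else 0 := by
  obtain ⟨j, rfl⟩ : ∃ j, i = j + 1 := ⟨i - 1, by omega⟩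
  obtain ⟨m, rfl⟩ : ∃ m, n = j + 1 + m + 1 := ⟨n - j - 2, by omega⟩
  have hlen : j + 1 + m + 1 - (j + 1) - 1 = m := by omega
  simp only [rho, card_filter, Nat.add_sub_cancel, hlen, sum_range_add, sum_range_succ]
  simp only [add_comm _ (j + 1), ← add_assoc]
  split_ifs <;> omega

theorem tailAlt_eq_card (x : ℕ → Fin 2) (i : ℕ) :
    tailAlt i x = #((range i).filter fun k => IsAltOn x k (i - 1)) := by
  rw [tailAlt, card_filter, card_filter,
    ← sum_range_reflect (fun k => if IsAltOn x k (i - 1) then 1 else 0)]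

theorem headAlt_shift_eq_card (x : ℕ → Fin 2) :
    headAlt (n - i) (fun k => x (k + i)) = #((Ico i n).filter fun l => IsAltOn x i l) := by
  rw [headAlt, card_filter, card_filter, sum_Ico_eq_sum_range]
  simp only [isAltOn_shift, zero_add, add_comm i]

theorem card_altIntervals_split (hin : i ≤ n) :
    #(altIntervals n x) = #(altIntervals i x) + #(altIntervals (n - i) (fun k => x (k + i))) +
      if x (i - 1) = x i then 0 else tailAlt i x * headAlt (n - i) (fun k => x (k + i)) := by
  set S := (altIntervals n x).filter fun q => ¬q.2 < i
  have hleft : (altIntervals n x).filter (fun q => q.2 < i) = altIntervals i x := by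
    ext ⟨k, l⟩
    simp only [mem_filter, mem_altIntervals]
    exact ⟨fun ⟨⟨hkl, _, h⟩, hli⟩ => ⟨hkl, hli, h⟩, fun ⟨hkl, hli, h⟩ => ⟨⟨hkl, by omega, h⟩, hli⟩⟩
  have hright : #(S.filter fun q => i ≤ q.1) = #(altIntervals (n - i) (fun k => x (k + i))) := by
    refine card_nbij' (fun q => (q.1 - i, q.2 - i)) (fun q => (q.1 + i, q.2 + i)) ?_ ?_ ?_ ?_
    · rintro ⟨k, l⟩ hq
      simp only [S, mem_coe, mem_filter, mem_altIntervals] at hq ⊢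
      obtain ⟨⟨⟨hkl, hln, h⟩, -⟩, hik⟩ := hq
      refine ⟨by omega, by omega, ?_⟩
      rwa [isAltOn_shift, Nat.sub_add_cancel hik, Nat.sub_add_cancel (hik.trans hkl)]
    · rintro ⟨k, l⟩ hq
      simp only [S, mem_coe, mem_filter, mem_altIntervals] at hq ⊢
      obtain ⟨hkl, hln, h⟩ := hq
      exact ⟨⟨⟨by omega, by omega, isAltOn_shift.1 h⟩, by omega⟩, by omega⟩
    · rintro ⟨k, l⟩ hq
      simp only [S, mem_coe, mem_filter, mem_altIntervals] at hq
      simp only [Prod.mk.injEq]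
      omega
    · rintro ⟨k, l⟩ -
      simp
  have hcross : #(S.filter fun q => ¬i ≤ q.1)
      = if x (i - 1) = x i then 0 else tailAlt i x * headAlt (n - i) (fun k => x (k + i)) := by
    split_ifs with hcut
    · refine card_eq_zero.2 (filter_eq_empty_iff.2 fun ⟨k, l⟩ hq hki => ?_)
      simp only [S, mem_filter, mem_altIntervals] at hq
      obtain ⟨⟨-, -, h⟩, hli⟩ := hq
      exact ((isAltOn_iff_of_lt_of_le (by omega) (by omega)).1 h).2.1 hcut
    · rw [tailAlt_eq_card, headAlt_shift_eq_card, ← card_product]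
      congr 1
      ext ⟨k, l⟩
      simp only [S, mem_filter, mem_altIntervals, mem_product, mem_range, mem_Ico]
      constructor
      · rintro ⟨⟨⟨hkl, hln, h⟩, hli⟩, hki⟩
        obtain ⟨h₁, -, h₂⟩ := (isAltOn_iff_of_lt_of_le (not_le.1 hki) (not_lt.1 hli)).1 h
        exact ⟨⟨by omega, h₁⟩, ⟨by omega, hln⟩, h₂⟩
      · rintro ⟨⟨hki, h₁⟩, ⟨hil, hln⟩, h₂⟩
        have h := (isAltOn_iff_of_lt_of_le hki hil).2 ⟨h₁, hcut, h₂⟩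
        exact ⟨⟨⟨hki.le.trans hil, hln, h⟩, by omega⟩, by omega⟩
  have hS := card_filter_add_card_filter_not (s := S) fun q => i ≤ q.1
  have hall : #(altIntervals i x) + #S = #(altIntervals n x) := by
    rw [← hleft]
    exact card_filter_add_card_filter_not _
  omega

end Splitting

theorem fB_eq (n len : ℕ) (x : ℕ → Fin 2) :
    fB n len x = rho len x * n - #(altIntervals len x) + len / 2 := by
  have h : (2 * #(altIntervals len x) : ℝ) = sumLenSq len x + len := by
    exact_mod_cast two_mul_card_altIntervals len x
  rw [fB]
  linarith

theorem fB_split (n : ℕ) {len i : ℕ} (x : ℕ → Fin 2) (hi : 1 ≤ i) (hin : i < len) :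
    fB n len x = fB n i x + fB n (len - i) (fun k => x (k + i)) -
      if x (i - 1) = x i then (n : ℝ)
      else (tailAlt i x : ℝ) * headAlt (len - i) (fun k => x (k + i)) := by
  have hρ : (rho i x + rho (len - i) (fun k => x (k + i)) : ℝ)
      = rho len x + if x (i - 1) = x i then 1 else 0 := by
    exact_mod_cast rho_add_rho hi hin
  have hA : (#(altIntervals len x) : ℝ) = #(altIntervals i x)
      + #(altIntervals (len - i) (fun k => x (k + i)))
      + if x (i - 1) = x i then 0
        else (tailAlt i x : ℝ) * headAlt (len - i) (fun k => x (k + i)) := by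
    exact_mod_cast card_altIntervals_split hin.le
  simp only [fB_eq, Nat.cast_sub hin.le]
  split_ifs at hρ hA ⊢ <;> linear_combination (-(n : ℝ)) * hρ - hA

/-- Splitting formula for `f_n` on binary words: for `y ∈ Z_2^{n'}` and `1 ≤ i ≤ n'-1`,
if `y_i = y_{i+1}` then `f_n(y) = f_n(y_{[1,i]}) + f_n(y_{[i+1,n']}) - n`, and if
`y_i ≠ y_{i+1}` then `f_n(y) = f_n(y_{[1,i]}) + f_n(y_{[i+1,n']}) - t(y_{[1,i]})·h(y_{[i+1,n']})`. -/
theorem stmt9 (n n' : ℕ) (y : Fin n' → Fin 2)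
    (i : ℕ) (hi : 1 ≤ i) (hi' : i ≤ n' - 1) :
    (extWord n' (by omega) y (i - 1) = extWord n' (by omega) y i →
      fB n n' (extWord n' (by omega) y)
        = fB n i (extWord n' (by omega) y)
            + fB n (n' - i) (fun k => extWord n' (by omega) y (k + i)) - n)
    ∧ (extWord n' (by omega) y (i - 1) ≠ extWord n' (by omega) y i →
      fB n n' (extWord n' (by omega) y)
        = fB n i (extWord n' (by omega) y)
            + fB n (n' - i) (fun k => extWord n' (by omega) y (k + i))
            - (tailAlt i (extWord n' (by omega) y) : ℝ)
                * (headAlt (n' - i) (fun k => extWord n' (by omega) y (k + i)) : ℝ)) := by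
  have hin : i < n' := by omega
  have h := fB_split n (extWord n' (by omega) y) hi hin
  exact ⟨fun hcut => by rw [h, if_pos hcut], fun hcut => by rw [h, if_neg hcut]⟩
end

section
/- For any positive integers n, n' with n' ≥ 2 and any binary word y ∈ Z_2^{n'}: f_n(y) - f_n(y_{[1,n'-1]}) equals -1/2 if y_{n'-1} = y_{n'}, and equals n - 1/2 - t(y_{[1,n'-1]}) if y_{n'-1} ≠ y_{n'}. -/
open Finset

/-!
Appending a symbol to a word changes only its end. If the new symbol repeats the last one, no run
starts and a new maximal alternating segment of length `1` appears, so `f_n` drops by `1/2`. If it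
differs, a run starts, contributing `n`, and, the alphabet being binary, the last maximal
alternating segment, of length `t`, is prolonged to length `t + 1`, raising `∑ s_j²` by `2t + 1`.
The length `t` is pinned down by: `x_k … x_l` is alternating iff `l - k < t`.
-/

theorem Finset.mem_iff_lt_card_of_isLowerSet {s : Finset ℕ} (hs : IsLowerSet (s : Set ℕ))
    {k : ℕ} : k ∈ s ↔ k < #s := by
  rcases hs.eq_univ_or_Iio with h | ⟨a, h⟩
  · exact absurd (h ▸ s.finite_toSet) Set.infinite_univ
  · rw [← Finset.coe_Iio, Finset.coe_inj] at h
    simp [h]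

def IsLeftMaxAltOn {m : ℕ} (x : ℕ → Fin m) (i j : ℕ) : Prop :=
  i ≤ j ∧ IsAltOn x i j ∧ (i = 0 ∨ ¬ IsAltOn x (i - 1) j)

section AnyAlphabet

variable {m : ℕ} {x : ℕ → Fin m} {i j k l : ℕ}

theorem IsAltOn.of_le (h : j ≤ i) : IsAltOn x i j :=
  ⟨fun k hk => by grind, fun k hk => by grind⟩

theorem IsAltOn.mono_left {i' : ℕ} (h : i ≤ i') (ha : IsAltOn x i j) : IsAltOn x i' j :=
  ⟨fun k hk => ha.1 k (Finset.Ico_subset_Ico_left h hk),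
    fun k hk => ha.2 k (Finset.Ico_subset_Ico_left h hk)⟩

theorem IsAltOn.mono_right {j' : ℕ} (h : j' ≤ j) (ha : IsAltOn x i j) : IsAltOn x i j' :=
  ⟨fun k hk => ha.1 k (Finset.Ico_subset_Ico_right h hk),
    fun k hk => ha.2 k (Finset.Ico_subset_Ico_right (by omega) hk)⟩

theorem not_isAltOn_succ_of_eq (hi : i ≤ l) (hx : x l = x (l + 1)) :
    ¬ IsAltOn x i (l + 1) :=
  fun h => h.1 l (Finset.mem_Ico.2 ⟨hi, l.lt_succ_self⟩) hx

theorem mem_altSegs {N : ℕ} {p : ℕ × ℕ} :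
    p ∈ altSegs N x ↔
      p.2 < N ∧ IsLeftMaxAltOn x p.1 p.2 ∧ (p.2 = N - 1 ∨ ¬ IsAltOn x p.1 (p.2 + 1)) := by
  simp only [altSegs, IsLeftMaxAltOn, Finset.mem_filter, Finset.mem_product, Finset.mem_range]
  grind

theorem rho_succ (l : ℕ) :
    rho (l + 2) x = rho (l + 1) x + if x l = x (l + 1) then 0 else 1 := by
  simp only [rho, Nat.add_sub_cancel, show l + 2 - 1 = l + 1 from rfl, Finset.card_filter,
    Finset.sum_range_succ]
  split_ifs <;> omega

variable (x) in
theorem tailAlt_le (N : ℕ) : tailAlt N x ≤ N :=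
  (Finset.card_filter_le _ _).trans (Finset.card_range N).le

theorem isAltOn_iff_lt_tailAlt (hk : k ≤ l) : IsAltOn x k l ↔ l - k < tailAlt (l + 1) x := by
  have hlower : IsLowerSet ((Finset.range (l + 1)).filter
      (fun j => IsAltOn x (l - j) l) : Set ℕ) := by
    intro j i hij hi
    simp only [Finset.coe_filter, Finset.mem_range, Set.mem_ofPred_eq] at hi ⊢
    exact ⟨by omega, hi.2.mono_left (by omega)⟩
  rw [tailAlt, Nat.add_sub_cancel, ← Finset.mem_iff_lt_card_of_isLowerSet hlower,
    Finset.mem_filter, Finset.mem_range, Nat.sub_sub_self hk]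
  exact ⟨fun h => ⟨by omega, h⟩, And.right⟩

variable (x) in
theorem tailAlt_pos (l : ℕ) : 0 < tailAlt (l + 1) x := by
  simpa using (isAltOn_iff_lt_tailAlt le_rfl).1 (IsAltOn.of_le (x := x) (le_refl l))

theorem isLeftMaxAltOn_iff : IsLeftMaxAltOn x i l ↔ i = l + 1 - tailAlt (l + 1) x := by
  have ht := tailAlt_pos x l
  have ht' := tailAlt_le x (l + 1)
  constructor
  · rintro ⟨hi, halt, hleft⟩
    rw [isAltOn_iff_lt_tailAlt hi] at halt
    rcases hleft with rfl | hleft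
    · omega
    · rw [isAltOn_iff_lt_tailAlt (by omega)] at hleft
      omega
  · rintro rfl
    refine ⟨by omega, (isAltOn_iff_lt_tailAlt (by omega)).2 (by omega), ?_⟩
    by_cases h0 : l + 1 - tailAlt (l + 1) x = 0
    · exact Or.inl h0
    · exact Or.inr fun h => by rw [isAltOn_iff_lt_tailAlt (by omega)] at h; omega

theorem tailAlt_succ_of_eq (hx : x l = x (l + 1)) : tailAlt (l + 2) x = 1 := by
  show tailAlt (l + 1 + 1) x = 1
  have hpos := tailAlt_pos x (l + 1)
  have hle : ¬ 1 < tailAlt (l + 1 + 1) x := fun h =>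
    not_isAltOn_succ_of_eq le_rfl hx ((isAltOn_iff_lt_tailAlt (by omega)).2 (by omega))
  omega

theorem altSegs_succ_of_eq (hx : x l = x (l + 1)) :
    altSegs (l + 2) x = insert (l + 1, l + 1) (altSegs (l + 1) x) := by
  ext ⟨i, j⟩
  have hlast : IsLeftMaxAltOn x i (l + 1) ↔ i = l + 1 := by
    rw [isLeftMaxAltOn_iff, tailAlt_succ_of_eq hx, Nat.add_sub_cancel]
  have hbreak : IsLeftMaxAltOn x i l → ¬ IsAltOn x i (l + 1) :=
    fun h => not_isAltOn_succ_of_eq h.1 hx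
  simp only [Finset.mem_insert, mem_altSegs, Prod.mk.injEq]
  grind

theorem sumLenSq_succ_of_eq (hx : x l = x (l + 1)) :
    sumLenSq (l + 2) x = sumLenSq (l + 1) x + 1 := by
  rw [sumLenSq, altSegs_succ_of_eq hx, Finset.sum_insert (by simp [mem_altSegs]), sumLenSq]
  simp [add_comm]

end AnyAlphabet

section Binary

variable {x : ℕ → Fin 2} {i l : ℕ}

theorem isAltOn_succ_iff_of_ne (hx : x l ≠ x (l + 1)) :
    IsAltOn x i (l + 1) ↔ IsAltOn x i l := by
  refine ⟨IsAltOn.mono_right l.le_succ, fun ⟨hne, hper⟩ => ⟨fun k hk => ?_, fun k hk => ?_⟩⟩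
  · rw [Finset.mem_Ico] at hk
    rcases lt_or_ge k l with hk' | hk'
    · exact hne k (by grind)
    · obtain rfl : k = l := by omega
      exact hx
  · rw [Finset.mem_Ico] at hk
    rcases lt_or_ge (k + 1) l with hk' | hk'
    · exact hper k (by grind)
    · obtain rfl : k + 1 = l := by omega
      -- two consecutive changes in a binary word return to the starting symbol
      have := hne k (by grind)
      show x k = x (k + 1 + 1)
      omega

theorem tailAlt_succ_of_ne (hx : x l ≠ x (l + 1)) :
    tailAlt (l + 2) x = tailAlt (l + 1) x + 1 := by
  show tailAlt (l + 1 + 1) x = _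
  have hpos := tailAlt_pos x l
  have hle := tailAlt_le x (l + 1)
  have hle' := tailAlt_le x (l + 1 + 1)
  have hlt : tailAlt (l + 1) x < tailAlt (l + 1 + 1) x := by
    have h := (isAltOn_succ_iff_of_ne (i := l + 1 - tailAlt (l + 1) x) hx).2
      ((isAltOn_iff_lt_tailAlt (by omega)).2 (by omega))
    rw [isAltOn_iff_lt_tailAlt (by omega)] at h
    omega
  have hmax : tailAlt (l + 1) x = l + 1 ∨ ¬ tailAlt (l + 1) x + 1 < tailAlt (l + 1 + 1) x := by
    refine or_iff_not_imp_left.2 fun ht h => ?_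
    have h' := (isAltOn_iff_lt_tailAlt (x := x) (k := l - tailAlt (l + 1) x) (l := l + 1)
      (by omega)).2 (by omega)
    rw [isAltOn_succ_iff_of_ne hx, isAltOn_iff_lt_tailAlt (by omega)] at h'
    omega
  omega

theorem altSegs_succ_of_ne (hx : x l ≠ x (l + 1)) :
    altSegs (l + 2) x = insert (l + 1 - tailAlt (l + 1) x, l + 1)
      ((altSegs (l + 1) x).erase (l + 1 - tailAlt (l + 1) x, l)) := by
  ext ⟨i, j⟩
  have hlast : IsLeftMaxAltOn x i (l + 1) ↔ i = l + 1 - tailAlt (l + 1) x := by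
    rw [isLeftMaxAltOn_iff, tailAlt_succ_of_ne hx, Nat.add_sub_add_right]
  have hprev : IsLeftMaxAltOn x i l ↔ i = l + 1 - tailAlt (l + 1) x := isLeftMaxAltOn_iff
  have hext : IsAltOn x i (l + 1) ↔ IsAltOn x i l := isAltOn_succ_iff_of_ne hx
  simp only [Finset.mem_insert, Finset.mem_erase, mem_altSegs, Prod.mk.injEq]
  grind [IsLeftMaxAltOn]

theorem sumLenSq_succ_of_ne (hx : x l ≠ x (l + 1)) :
    sumLenSq (l + 2) x = sumLenSq (l + 1) x + 2 * tailAlt (l + 1) x + 1 := by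
  have hpos := tailAlt_pos x l
  have hle := tailAlt_le x (l + 1)
  have hmem : (l + 1 - tailAlt (l + 1) x, l) ∈ altSegs (l + 1) x :=
    mem_altSegs.2 ⟨l.lt_succ_self, isLeftMaxAltOn_iff.2 rfl, Or.inl rfl⟩
  rw [sumLenSq, altSegs_succ_of_ne hx, Finset.sum_insert (by simp [mem_altSegs]), sumLenSq,
    ← Finset.add_sum_erase _ _ hmem,
    show l + 1 - (l + 1 - tailAlt (l + 1) x) + 1 = tailAlt (l + 1) x + 1 by omega,
    show l - (l + 1 - tailAlt (l + 1) x) + 1 = tailAlt (l + 1) x by omega]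
  ring

theorem fB_succ_sub_of_eq (n : ℕ) (hx : x l = x (l + 1)) :
    fB n (l + 2) x - fB n (l + 1) x = -(1 / 2) := by
  simp only [fB, rho_succ, if_pos hx, sumLenSq_succ_of_eq hx]
  push_cast
  ring

theorem fB_succ_sub_of_ne (n : ℕ) (hx : x l ≠ x (l + 1)) :
    fB n (l + 2) x - fB n (l + 1) x = n - 1 / 2 - tailAlt (l + 1) x := by
  simp only [fB, rho_succ, if_neg hx, sumLenSq_succ_of_ne hx]
  push_cast
  ring

end Binary

/-- Last-symbol difference formula for `f_n` on binary words: for `y ∈ Z_2^{n'}` with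
`n' ≥ 2`, `f_n(y) - f_n(y_{[1,n'-1]})` equals `-1/2` if `y_{n'-1} = y_{n'}` and equals
`n - 1/2 - t(y_{[1,n'-1]})` otherwise. -/
theorem stmt10 (n n' : ℕ) (hn' : 2 ≤ n') (y : Fin n' → Fin 2) :
    (extWord n' (by omega) y (n' - 2) = extWord n' (by omega) y (n' - 1) →
      fB n n' (extWord n' (by omega) y) - fB n (n' - 1) (extWord n' (by omega) y) = -(1 / 2))
    ∧ (extWord n' (by omega) y (n' - 2) ≠ extWord n' (by omega) y (n' - 1) →
      fB n n' (extWord n' (by omega) y) - fB n (n' - 1) (extWord n' (by omega) y)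
        = (n : ℝ) - 1 / 2 - (tailAlt (n' - 1) (extWord n' (by omega) y) : ℝ)) := by
  obtain ⟨l, rfl⟩ : ∃ l, n' = l + 2 := ⟨n' - 2, by omega⟩
  exact ⟨fB_succ_sub_of_eq n, fB_succ_sub_of_ne n⟩
end
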